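/- If C is an n×n complex matrix that commutes with T P(σ) Tᵗ for every σ ∈ S_n, then there exist scalars λ₁, λ₂ ∈ ℂ such that C is the block-diagonal matrix λ₁ ⊕ λ₂ I_{n−1} (i.e., C_{1,1} = λ₁, C_{i,i} = λ₂ for 2 ≤ i ≤ n, and all off-diagonal entries of C are 0). -/

import Mathlib

open Matrix

/-- The n×n matrix `U` from the paper: first row all ones; row `m` (1-based, m≥2)
has entries −1 in columns 1,…,n−m+1, entry n−m+1 in column n−m+2, and 0 afterwards.
Indices are 0-based here, so row `i` corresponds to `m = i+1`. -/
noncomputable def Umat (n : ℕ) : Matrix (Fin n) (Fin n) ℝ :=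
  Matrix.of fun i j =>
    if i.val = 0 then 1
    else if j.val < n - i.val then -1
    else if j.val = n - i.val then ((n : ℝ) - i.val)
    else 0

/-- The diagonal matrix `A` with `A₁₁ = 1/√n` and `A_kk = 1/√((n−k+1)(n−k+2))` for k ≥ 2
(1-based `k = i+1`). -/
noncomputable def Amat (n : ℕ) : Matrix (Fin n) (Fin n) ℝ :=
  Matrix.diagonal fun i =>
    if i.val = 0 then 1 / Real.sqrt n
    else 1 / Real.sqrt (((n : ℝ) - i.val) * ((n : ℝ) - i.val + 1))

/-- The orthogonal transform `T = A U`. -/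
noncomputable def Tmat (n : ℕ) : Matrix (Fin n) (Fin n) ℝ := Amat n * Umat n

/-- The permutation matrix `P(σ)` with `P(σ)_{i,j} = 1` iff `j = σ(i)`. -/
def Pmat (n : ℕ) (σ : Equiv.Perm (Fin n)) : Matrix (Fin n) (Fin n) ℝ :=
  Matrix.of fun i j => if j = σ i then 1 else 0

/-
`U` is the Helmert matrix, so `T` is orthogonal and its first row is the constant vector
`1/√n`. Conjugating by `T`, the matrix `D = Tᵀ C T` commutes with every permutation matrix, so
`D = a I + b 𝟙𝟙ᵀ`. Hence `C = T D Tᵀ = a I + b (T𝟙)(T𝟙)ᵀ`, and `T𝟙 = √n e₁`.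
-/

namespace Matrix

variable {ι R : Type*} [Fintype ι] [DecidableEq ι]

theorem apply_perm_apply_perm_of_commute_permMatrix [NonAssocSemiring R] {D : Matrix ι ι R}
    {σ : Equiv.Perm ι} (h : Commute D (σ.permMatrix R)) (i j : ι) :
    D (σ i) (σ j) = D i j := by
  have := congrFun₂ h.eq i (σ j)
  rw [PEquiv.mul_toMatrix_toPEquiv, PEquiv.toMatrix_toPEquiv_mul] at this
  simpa using this.symm

theorem exists_eq_smul_one_add_smul_of_forall_commute_permMatrix [Ring R] {D : Matrix ι ι R}
    (h : ∀ σ : Equiv.Perm ι, Commute D (σ.permMatrix R)) :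
    ∃ a b : R, D = a • 1 + b • vecMulVec 1 1 := by
  obtain ⟨d, hd⟩ : ∃ d, ∀ i, D i i = d := by
    rcases isEmpty_or_nonempty ι with _ | ⟨⟨i₀⟩⟩
    · exact ⟨0, isEmptyElim⟩
    · refine ⟨D i₀ i₀, fun i => ?_⟩
      simpa using apply_perm_apply_perm_of_commute_permMatrix (h (Equiv.swap i₀ i)) i₀ i₀
  obtain ⟨b, hb⟩ : ∃ b, ∀ i j, i ≠ j → D i j = b := by
    by_cases hne : ∃ i₀ j₀ : ι, i₀ ≠ j₀
    · obtain ⟨i₀, j₀, h₀⟩ := hne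
      refine ⟨D i₀ j₀, fun i j hij => ?_⟩
      obtain ⟨σ, hσi, hσj⟩ := MulAction.is_two_pretransitive_iff.mp
        (Equiv.Perm.isMultiplyPretransitive ι 2) h₀ hij
      rw [← hσi, ← hσj]
      exact apply_perm_apply_perm_of_commute_permMatrix (h σ) i₀ j₀
    · push Not at hne
      exact ⟨0, fun i j hij => (hij (hne i j)).elim⟩
  refine ⟨d - b, b, ext fun i j => ?_⟩
  by_cases hij : i = j
  · subst hij
    simp [hd]
  · simp [hb i j hij, hij]

theorem exists_eq_smul_one_add_smul_vecMulVec_of_forall_commute_conj_permMatrix [CommRing R]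
    {T C : Matrix ι ι R} (hT : T * Tᵀ = 1)
    (hC : ∀ σ : Equiv.Perm ι, Commute C (T * σ.permMatrix R * Tᵀ)) :
    ∃ a b : R, C = a • 1 + b • vecMulVec (T *ᵥ 1) (T *ᵥ 1) := by
  have hT' : Tᵀ * T = 1 := mul_eq_one_comm.mp hT
  have hD : ∀ σ : Equiv.Perm ι, Commute (Tᵀ * C * T) (σ.permMatrix R) := fun σ => by
    set P := σ.permMatrix R
    calc Tᵀ * C * T * P = Tᵀ * (C * (T * P * Tᵀ)) * T := by
          simp only [Matrix.mul_assoc, hT', Matrix.mul_one]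
      _ = Tᵀ * (T * P * Tᵀ * C) * T := by rw [(hC σ).eq]
      _ = P * (Tᵀ * C * T) := by simp only [← Matrix.mul_assoc, hT', Matrix.one_mul]
  obtain ⟨a, b, hab⟩ := exists_eq_smul_one_add_smul_of_forall_commute_permMatrix hD
  refine ⟨a, b, ?_⟩
  calc C = T * Tᵀ * C * (T * Tᵀ) := by rw [hT, Matrix.one_mul, Matrix.mul_one]
    _ = T * (Tᵀ * C * T) * Tᵀ := by simp only [Matrix.mul_assoc]
    _ = _ := by
      rw [hab, Matrix.mul_add, Matrix.add_mul, Matrix.mul_smul, Matrix.smul_mul, Matrix.mul_one,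
        hT, Matrix.mul_smul, Matrix.smul_mul, mul_vecMulVec, vecMulVec_mul, vecMul_transpose]

end Matrix

def helmertRow (m j : ℕ) : ℝ := if j < m then -1 else if j = m then (m : ℝ) else 0

lemma helmertRow_eq_zero {m j : ℕ} (h : m < j) : helmertRow m j = 0 := by
  simp [helmertRow, h.not_gt, h.ne']

lemma sum_range_helmertRow_mul {m n : ℕ} (hm : m < n) (f : ℕ → ℝ) :
    ∑ j ∈ Finset.range n, helmertRow m j * f j = m * f m - ∑ j ∈ Finset.range m, f j := by
  rw [← Finset.sum_range_add_sum_Ico _ (Nat.succ_le_of_lt hm), Finset.sum_range_succ,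
    Finset.sum_eq_zero (s := Finset.Ico _ n) fun j hj => by
      rw [helmertRow_eq_zero (Finset.mem_Ico.mp hj).1, zero_mul],
    Finset.sum_congr rfl fun j hj => by
      rw [helmertRow, if_pos (Finset.mem_range.mp hj), neg_one_mul]]
  simp only [Finset.sum_neg_distrib, helmertRow, lt_self_iff_false, ↓reduceIte, add_zero,
    sub_eq_add_neg]
  ring

lemma sum_range_helmertRow {m n : ℕ} (hm : m < n) :
    ∑ j ∈ Finset.range n, helmertRow m j = 0 := by
  simpa using sum_range_helmertRow_mul hm 1

lemma sum_range_helmertRow_mul_helmertRow {m m' n : ℕ} (hm : m < n) (hm' : m' < n) :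
    ∑ j ∈ Finset.range n, helmertRow m j * helmertRow m' j =
      if m = m' then (m : ℝ) * (m + 1) else 0 := by
  have of_le : ∀ {m m'}, m < n → m ≤ m' →
      ∑ j ∈ Finset.range n, helmertRow m j * helmertRow m' j =
        if m = m' then (m : ℝ) * (m + 1) else 0 := by
    intro m m' hm hle
    rw [sum_range_helmertRow_mul hm, Finset.sum_congr rfl fun j hj =>
      show helmertRow m' j = -1 from if_pos ((Finset.mem_range.mp hj).trans_le hle)]
    rcases hle.eq_or_lt with rfl | hlt
    · simp only [helmertRow, lt_self_iff_false, ↓reduceIte, Finset.sum_neg_distrib,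
        Finset.sum_const, Finset.card_range, nsmul_eq_mul, mul_one, sub_neg_eq_add]
      ring
    · simp [helmertRow, hlt, hlt.ne]
  rcases le_total m m' with hle | hle
  · exact of_le hm hle
  · simp_rw [mul_comm (helmertRow m _), of_le hm' hle, eq_comm (a := m')]
    split_ifs with h <;> simp [h]

lemma Umat_apply {n : ℕ} (i j : Fin n) :
    Umat n i j = if i.val = 0 then 1 else helmertRow (n - i) j := by
  simp only [Umat, helmertRow, of_apply, Nat.cast_sub i.isLt.le]

noncomputable def Umat.rowNormSq (n : ℕ) (i : Fin n) : ℝ :=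
  if i.val = 0 then n else (n - i) * (n - i + 1)

lemma Umat.rowNormSq_pos {n : ℕ} (i : Fin n) : 0 < Umat.rowNormSq n i := by
  have : (i : ℝ) + 1 ≤ n := by exact_mod_cast i.isLt
  unfold Umat.rowNormSq
  split_ifs <;> nlinarith

lemma Umat_mul_transpose (n : ℕ) : Umat n * (Umat n)ᵀ = diagonal (Umat.rowNormSq n) := by
  ext i k
  have hsub : ∀ {i : Fin n}, i.val ≠ 0 → n - i.val < n := fun {i} hi => by omega
  simp only [mul_apply, transpose_apply, Umat_apply, diagonal_apply, Umat.rowNormSq]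
  by_cases hi : i.val = 0 <;> by_cases hk : k.val = 0
  · simp [hi, hk, Fin.ext_iff]
  · simp only [hi, ↓reduceIte, hk, one_mul, Fin.sum_univ_eq_sum_range (helmertRow (n - k)),
      sum_range_helmertRow (hsub hk), Fin.ext_iff, right_eq_ite_iff]
    omega
  · simp [hi, hk, Fin.ext_iff, Fin.sum_univ_eq_sum_range (helmertRow (n - i)),
      sum_range_helmertRow (hsub hi)]
  · simp only [hi, hk, if_false]
    rw [Fin.sum_univ_eq_sum_range (fun j => helmertRow (n - i) j * helmertRow (n - k) j),
      sum_range_helmertRow_mul_helmertRow (hsub hi) (hsub hk)]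
    have hik : n - i.val = n - k.val ↔ i = k := by rw [Fin.ext_iff]; omega
    simp only [hik, Nat.cast_sub i.isLt.le]

lemma Umat_mulVec_one (n : ℕ) : Umat n *ᵥ 1 = fun i => if i.val = 0 then (n : ℝ) else 0 := by
  ext i
  simp only [mulVec, dotProduct, Pi.one_apply, mul_one, Umat_apply]
  split_ifs with hi
  · simp
  · rw [Fin.sum_univ_eq_sum_range (helmertRow (n - i)), sum_range_helmertRow (by omega)]

lemma Amat_eq_diagonal (n : ℕ) : Amat n = diagonal fun i => 1 / √(Umat.rowNormSq n i) := by
  simp only [Amat, Umat.rowNormSq, apply_ite]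

lemma Tmat_mul_transpose (n : ℕ) : Tmat n * (Tmat n)ᵀ = 1 := by
  rw [Tmat, transpose_mul, Matrix.mul_assoc, ← Matrix.mul_assoc (Umat n), Umat_mul_transpose,
    Amat_eq_diagonal, diagonal_transpose, diagonal_mul_diagonal, diagonal_mul_diagonal,
    ← diagonal_one]
  congr 1
  ext i
  have h := Umat.rowNormSq_pos i
  field_simp
  rw [Real.sq_sqrt h.le]

lemma Tmat_mulVec_one (n : ℕ) : Tmat n *ᵥ 1 = fun i => if i.val = 0 then √n else 0 := by
  ext i
  rw [Tmat, ← mulVec_mulVec, Umat_mulVec_one, Amat, mulVec_diagonal]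
  split_ifs with hi
  · rw [one_div, inv_mul_eq_div, Real.div_sqrt]
  · rw [mul_zero]

lemma Pmat_eq_permMatrix (n : ℕ) (σ : Equiv.Perm (Fin n)) : Pmat n σ = σ.permMatrix ℝ := by
  ext i j
  simp [Pmat, eq_comm]

lemma Matrix.map_ofReal_mul {l m o : Type*} [Fintype m] (M : Matrix l m ℝ) (N : Matrix m o ℝ) :
    (M * N).map Complex.ofReal = M.map Complex.ofReal * N.map Complex.ofReal :=
  Matrix.map_mul (f := Complex.ofRealHom)

noncomputable def Tmat.toComplex (n : ℕ) : Matrix (Fin n) (Fin n) ℂ := (Tmat n).map Complex.ofReal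

lemma Tmat.toComplex_mul_transpose (n : ℕ) : Tmat.toComplex n * (Tmat.toComplex n)ᵀ = 1 := by
  rw [Tmat.toComplex, ← transpose_map, ← map_ofReal_mul, Tmat_mul_transpose,
    Matrix.map_one _ Complex.ofReal_zero Complex.ofReal_one]

lemma map_ofReal_Tmat_mul_Pmat_mul_transpose (n : ℕ) (σ : Equiv.Perm (Fin n)) :
    (Tmat n * Pmat n σ * (Tmat n)ᵀ).map Complex.ofReal =
      Tmat.toComplex n * σ.permMatrix ℂ * (Tmat.toComplex n)ᵀ := by
  rw [map_ofReal_mul, map_ofReal_mul, transpose_map, Pmat_eq_permMatrix, Tmat.toComplex]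
  congr 2
  exact PEquiv.map_toMatrix Complex.ofRealHom σ.toPEquiv

lemma vecMulVec_Tmat_toComplex_mulVec_one (n : ℕ) :
    vecMulVec (Tmat.toComplex n *ᵥ 1) (Tmat.toComplex n *ᵥ 1) =
      diagonal fun i => if i.val = 0 then (n : ℂ) else 0 := by
  have hv : Tmat.toComplex n *ᵥ 1 = fun i => ((Tmat n *ᵥ 1) i : ℂ) := by
    ext i
    simp [Tmat.toComplex, mulVec, dotProduct]
  ext i j
  rw [hv, Tmat_mulVec_one, vecMulVec_apply, diagonal_apply]
  by_cases hi : i.val = 0 <;> by_cases hj : j.val = 0 <;>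
    simp [hi, hj, eq_comm (a := (0 : ℕ)), Fin.ext_iff, ← Complex.ofReal_mul, Real.mul_self_sqrt]

theorem stmt_14_general (n : ℕ) (C : Matrix (Fin n) (Fin n) ℂ)
    (hC : ∀ σ : Equiv.Perm (Fin n),
      C * (Tmat n * Pmat n σ * (Tmat n)ᵀ).map (fun x => (x : ℂ)) =
        (Tmat n * Pmat n σ * (Tmat n)ᵀ).map (fun x => (x : ℂ)) * C) :
    ∃ l1 l2 : ℂ, C = Matrix.diagonal (fun i => if i.val = 0 then l1 else l2) := by
  obtain ⟨a, b, hab⟩ := exists_eq_smul_one_add_smul_vecMulVec_of_forall_commute_conj_permMatrix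
    (Tmat.toComplex_mul_transpose n) fun σ => by
      rw [← map_ofReal_Tmat_mul_Pmat_mul_transpose]
      exact hC σ
  refine ⟨a + n * b, a, ?_⟩
  rw [hab, vecMulVec_Tmat_toComplex_mulVec_one, ← diagonal_one, ← diagonal_smul, ← diagonal_smul,
    diagonal_add]
  congr 1
  ext i
  simp only [Pi.smul_apply, smul_eq_mul]
  split_ifs <;> ring

/-- If C is an n×n complex matrix commuting with T P(σ) Tᵗ for every
σ ∈ Sₙ, then C = λ₁ ⊕ λ₂ I_{n−1} for some scalars λ₁, λ₂ ∈ ℂ. -/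
theorem stmt_14 (n : ℕ) (hn : 2 ≤ n) (C : Matrix (Fin n) (Fin n) ℂ)
    (hC : ∀ σ : Equiv.Perm (Fin n),
      C * (Tmat n * Pmat n σ * (Tmat n)ᵀ).map (fun x => (x : ℂ)) =
        (Tmat n * Pmat n σ * (Tmat n)ᵀ).map (fun x => (x : ℂ)) * C) :
    ∃ l1 l2 : ℂ, C = Matrix.diagonal (fun i => if i.val = 0 then l1 else l2) :=
  stmt_14_general n C hC
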